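/- Let A and B be lattices with least elements, and suppose that A or B is distributive. Then the semilattice tensor product and the lattice tensor product coincide: A ⊗ B = A ⊠ B. That is, a subset H of A × B belongs to A ⊠ B if and only if H is the smallest bi-ideal of A × B containing ⋃_{i<n}(a_i ∘ b_i) for some n > 0 and some ⟨a_i,b_i⟩ ∈ A × B (i < n). -/

import Mathlib

/-- The pure box `a □ b = {⟨x,y⟩ : x ≤ a or y ≤ b}`. -/
def pureBox {A B : Type*} [Lattice A] [Lattice B] (a : A) (b : B) : Set (A × B) :=
  {p : A × B | p.1 ≤ a ∨ p.2 ≤ b}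

/-- `a ∘ b = {⟨x,y⟩ : x ≤ a and y ≤ b}`. -/
def pureCirc {A B : Type*} [Lattice A] [Lattice B] (a : A) (b : B) : Set (A × B) :=
  {p : A × B | p.1 ≤ a ∧ p.2 ≤ b}

/-- The box product `A □ B`: all finite (nonempty) intersections of pure boxes. -/
def BoxProd (A B : Type*) [Lattice A] [Lattice B] : Set (Set (A × B)) :=
  {H | ∃ (n : ℕ) (a : Fin (n + 1) → A) (b : Fin (n + 1) → B),
    H = ⋂ i, pureBox (a i) (b i)}

/-- `A ⊡ B`: all finite unions of pure boxes (at least one) and pure circles. -/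
def BoxDot (A B : Type*) [Lattice A] [Lattice B] : Set (Set (A × B)) :=
  {H | ∃ (m n : ℕ) (a : Fin (m + 1) → A) (b : Fin (m + 1) → B)
      (c : Fin n → A) (d : Fin n → B),
    H = (⋃ i, pureBox (a i) (b i)) ∪ ⋃ j, pureCirc (c j) (d j)}

/-- The box closure of a subset of `A × B`: intersection of all pure boxes containing it. -/
def BoxCl {A B : Type*} [Lattice A] [Lattice B] (X : Set (A × B)) : Set (A × B) :=
  ⋂ (a : A) (b : B) (_ : X ⊆ pureBox a b), pureBox a b

/-- The pure lattice tensor `a ⊠ b = (a ∘ b) ∪ ⊥_{A,B}`, where `⊥_{A,B}` consists of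
the pairs one of whose coordinates is a least element. -/
def pureTens {A B : Type*} [Lattice A] [Lattice B] (a : A) (b : B) : Set (A × B) :=
  pureCirc a b ∪ {p : A × B | IsBot p.1 ∨ IsBot p.2}

/-- A subset of `A × B` is confined if it is contained in some pure lattice tensor. -/
def Confined {A B : Type*} [Lattice A] [Lattice B] (X : Set (A × B)) : Prop :=
  ∃ (a : A) (b : B), X ⊆ pureTens a b

/-- The lattice tensor product `A ⊠ B`: all confined elements of `A □ B`. -/
def LatTens (A B : Type*) [Lattice A] [Lattice B] : Set (Set (A × B)) :=
  {H | H ∈ BoxProd A B ∧ Confined H}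

/-- `X^△ = {⟨a,b⟩ : ⟨x,y⟩ ◁ ⟨a,b⟩ for all ⟨x,y⟩ ∈ X}` where `⟨x,y⟩ ◁ ⟨a,b⟩` iff
`x ≤ a` or `y ≤ b`. -/
def trUp {A B : Type*} [Lattice A] [Lattice B] (X : Set (A × B)) : Set (A × B) :=
  {p : A × B | ∀ q ∈ X, q.1 ≤ p.1 ∨ q.2 ≤ p.2}

/-- `X^▽ = {⟨a,b⟩ : ⟨a,b⟩ ◁ ⟨x,y⟩ for all ⟨x,y⟩ ∈ X}`. -/
def trDown {A B : Type*} [Lattice A] [Lattice B] (X : Set (A × B)) : Set (A × B) :=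
  {p : A × B | ∀ q ∈ X, p.1 ≤ q.1 ∨ p.2 ≤ q.2}

/-- A bi-ideal of `A × B` (for lattices with zero). -/
def IsBiIdeal {A B : Type*} [Lattice A] [OrderBot A] [Lattice B] [OrderBot B]
    (H : Set (A × B)) : Prop :=
  (∀ a : A, (a, (⊥ : B)) ∈ H) ∧ (∀ b : B, ((⊥ : A), b) ∈ H) ∧
  (∀ p q : A × B, q.1 ≤ p.1 → q.2 ≤ p.2 → p ∈ H → q ∈ H) ∧
  (∀ (a₀ a₁ : A) (b : B), (a₀, b) ∈ H → (a₁, b) ∈ H → (a₀ ⊔ a₁, b) ∈ H) ∧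
  (∀ (a : A) (b₀ b₁ : B), (a, b₀) ∈ H → (a, b₁) ∈ H → (a, b₀ ⊔ b₁) ∈ H)

/-- The semilattice tensor product `A ⊗ B`: the bi-ideals of `A × B` that are the
smallest bi-ideal containing some finite union of pure tensors. -/
def TensProd (A B : Type*) [Lattice A] [OrderBot A] [Lattice B] [OrderBot B] :
    Set (Set (A × B)) :=
  {H | IsBiIdeal H ∧ ∃ (n : ℕ) (a : Fin (n + 1) → A) (b : Fin (n + 1) → B),
    (⋃ i, pureCirc (a i) (b i)) ⊆ H ∧
    ∀ K : Set (A × B), IsBiIdeal K → (⋃ i, pureCirc (a i) (b i)) ⊆ K → H ⊆ K}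

/-! Given generators `a i ∘ b i`, the bi-ideal they generate is caught between them and
`⋂_S (⋁_{i ∈ S} a i) □ (⋁_{i ∉ S} b i)`, which is already a bi-ideal. When `A` is distributive,
a point `(x, y)` of this intersection either lies below enough generators to reach it by joins
in the second coordinate, or `x` splits as `⋁ (x ⊓ a i)` and each piece sees one more
generator; so the intersection is the generated bi-ideal, and it is confined. Conversely, a
box intersection inside `u ⊠ v` is generated by the finitely many pure tensors
`(u ⊓ ⋀_{i ∈ S} a i) ∘ (v ⊓ ⋀_{i ∉ S} b i)`. -/
section

variable {A B : Type*} [Lattice A] [Lattice B]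

theorem exists_nonempty_equiv_fin_succ (ι : Type*) [Fintype ι] [Nonempty ι] :
    ∃ n : ℕ, Nonempty (Fin (n + 1) ≃ ι) :=
  ⟨_, ⟨(Fintype.equivFinOfCardEq (Nat.succ_pred_eq_of_pos Fintype.card_pos).symm).symm⟩⟩

theorem iInter_pureBox_mem_boxProd {ι : Type*} [Fintype ι] [Nonempty ι] (a : ι → A) (b : ι → B) :
    ⋂ i, pureBox (a i) (b i) ∈ BoxProd A B := by
  obtain ⟨n, ⟨e⟩⟩ := exists_nonempty_equiv_fin_succ ι
  exact ⟨n, a ∘ e, b ∘ e, (e.surjective.iInter_comp fun i => pureBox (a i) (b i)).symm⟩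

end

section

open Finset

variable {A B : Type*} [Lattice A] [OrderBot A] [Lattice B] [OrderBot B]

namespace IsBiIdeal

variable {K : Set (A × B)}

theorem mono (hK : IsBiIdeal K) {p q : A × B} (hp : p ∈ K) (hq : q ≤ p) : q ∈ K :=
  hK.2.2.1 p q hq.1 hq.2 hp

theorem mem_of_isBot (hK : IsBiIdeal K) {p : A × B} (hp : IsBot p.1 ∨ IsBot p.2) : p ∈ K := by
  rcases hp with h | h
  · exact hK.mono (hK.2.1 p.2) ⟨h ⊥, le_rfl⟩
  · exact hK.mono (hK.1 p.1) ⟨le_rfl, h ⊥⟩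

theorem finsetSup_fst_mem (hK : IsBiIdeal K) {ι : Type*} {s : Finset ι} {f : ι → A} {y : B}
    (h : ∀ i ∈ s, (f i, y) ∈ K) : (s.sup f, y) ∈ K := by
  classical
  induction s using Finset.induction_on with
  | empty => exact hK.2.1 y
  | insert i s _ ih =>
    rw [sup_insert]
    exact hK.2.2.2.1 _ _ _ (h i (mem_insert_self i s)) (ih fun j hj => h j (mem_insert_of_mem hj))

theorem finsetSup_snd_mem (hK : IsBiIdeal K) {ι : Type*} {s : Finset ι} {g : ι → B} {x : A}
    (h : ∀ i ∈ s, (x, g i) ∈ K) : (x, s.sup g) ∈ K := by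
  classical
  induction s using Finset.induction_on with
  | empty => exact hK.1 x
  | insert i s _ ih =>
    rw [sup_insert]
    exact hK.2.2.2.2 _ _ _ (h i (mem_insert_self i s)) (ih fun j hj => h j (mem_insert_of_mem hj))

theorem preimage_swap (hK : IsBiIdeal K) : IsBiIdeal (Prod.swap ⁻¹' K) :=
  ⟨hK.2.1, hK.1, fun p q h₁ h₂ hp => hK.2.2.1 p.swap q.swap h₂ h₁ hp,
    fun _ _ _ h₀ h₁ => hK.2.2.2.2 _ _ _ h₀ h₁, fun _ _ _ h₀ h₁ => hK.2.2.2.1 _ _ _ h₀ h₁⟩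

theorem iInter {ι : Sort*} {K : ι → Set (A × B)} (hK : ∀ i, IsBiIdeal (K i)) :
    IsBiIdeal (⋂ i, K i) := by
  simp only [IsBiIdeal, Set.mem_iInter] at *
  exact ⟨fun a i => (hK i).1 a, fun b i => (hK i).2.1 b,
    fun p q h₁ h₂ hp i => (hK i).2.2.1 p q h₁ h₂ (hp i),
    fun _ _ _ h₀ h₁ i => (hK i).2.2.2.1 _ _ _ (h₀ i) (h₁ i),
    fun _ _ _ h₀ h₁ i => (hK i).2.2.2.2 _ _ _ (h₀ i) (h₁ i)⟩

end IsBiIdeal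

theorem isBiIdeal_pureBox (a : A) (b : B) : IsBiIdeal (pureBox a b) := by
  refine ⟨fun _ => Or.inr bot_le, fun _ => Or.inl bot_le, fun p q h₁ h₂ hp => ?_,
    fun a₀ a₁ y h₀ h₁ => ?_, fun x b₀ b₁ h₀ h₁ => ?_⟩
  · exact hp.imp h₁.trans h₂.trans
  · rcases h₀ with h₀ | h₀
    · exact h₁.imp (sup_le h₀) id
    · exact Or.inr h₀
  · rcases h₀ with h₀ | h₀
    · exact Or.inl h₀
    · exact h₁.imp id (sup_le h₀)

variable {ι : Type*} [Fintype ι] [DecidableEq ι]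

def splitBox (a : ι → A) (b : ι → B) : Set (A × B) :=
  ⋂ S : Finset ι, pureBox (S.sup a) (Sᶜ.sup b)

theorem isBiIdeal_splitBox (a : ι → A) (b : ι → B) : IsBiIdeal (splitBox a b) :=
  IsBiIdeal.iInter fun _ => isBiIdeal_pureBox _ _

theorem pureCirc_subset_splitBox (a : ι → A) (b : ι → B) (i : ι) :
    pureCirc (a i) (b i) ⊆ splitBox a b := by
  intro p hp
  refine Set.mem_iInter.2 fun S => ?_
  by_cases hi : i ∈ S
  · exact Or.inl (hp.1.trans (le_sup hi))
  · exact Or.inr (hp.2.trans (le_sup (mem_compl.2 hi)))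

theorem splitBox_subset_pureTens (a : ι → A) (b : ι → B) :
    splitBox a b ⊆ pureTens (univ.sup a) (univ.sup b) := by
  intro p hp
  have huniv := Set.mem_iInter.1 hp univ
  have hempty := Set.mem_iInter.1 hp ∅
  rw [compl_univ, sup_empty] at huniv
  rw [compl_empty, sup_empty] at hempty
  rcases huniv with h₁ | h₂
  · rcases hempty with h₁' | h₂
    · exact Or.inr (Or.inl fun _ => h₁'.trans bot_le)
    · exact Or.inl ⟨h₁, h₂⟩
  · exact Or.inr (Or.inr fun _ => h₂.trans bot_le)

theorem splitBox_mem_latTens (a : ι → A) (b : ι → B) : splitBox a b ∈ LatTens A B :=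
  ⟨iInter_pureBox_mem_boxProd _ _, _, _, splitBox_subset_pureTens a b⟩

theorem mem_splitBox_swap_iff {a : ι → A} {b : ι → B} {p : A × B} :
    p.swap ∈ splitBox b a ↔ p ∈ splitBox a b := by
  simp only [splitBox, pureBox, Set.mem_iInter, Set.mem_ofPred_eq, Prod.fst_swap, Prod.snd_swap]
  refine ⟨fun h S => ?_, fun h S => ?_⟩ <;> simpa only [compl_compl, or_comm] using h Sᶜ

end

section

open Finset

variable {A B : Type*} [DistribLattice A] [OrderBot A] [Lattice B] [OrderBot B]
  {ι : Type*} [Fintype ι] [DecidableEq ι]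

theorem IsBiIdeal.mem_of_forall_subset_le_sup_or {K : Set (A × B)} (hK : IsBiIdeal K)
    {a : ι → A} {b : ι → B} (hgen : ∀ i, pureCirc (a i) (b i) ⊆ K) {y : B} (U : Finset ι) {x : A}
    (hxa : ∀ i ∉ U, x ≤ a i) (hxU : ∀ S ⊆ U, x ≤ S.sup a ∨ y ≤ Sᶜ.sup b) : (x, y) ∈ K := by
  induction U using Finset.strongInduction generalizing x with
  | H U ih =>
    by_cases hy : y ≤ Uᶜ.sup b
    · refine hK.mono (hK.finsetSup_snd_mem fun i hi => ?_) ⟨le_rfl, hy⟩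
      exact hgen i ⟨hxa i (mem_compl.1 hi), le_rfl⟩
    -- `x` splits as the join of the `x ⊓ a i`, each of which lies below one more generator.
    have hx : x = U.sup fun i => x ⊓ a i := by
      rw [← sup_inf_distrib_left, inf_eq_left.2 ((hxU U subset_rfl).resolve_right hy)]
    rw [hx]
    refine hK.finsetSup_fst_mem fun i hi => ih _ (erase_ssubset hi) (fun j hj => ?_) fun S hS => ?_
    · by_cases hji : j = i
      · exact hji ▸ inf_le_right
      · exact inf_le_left.trans (hxa j fun hjU => hj (mem_erase.2 ⟨hji, hjU⟩))
    · exact (hxU S (hS.trans (erase_subset i U))).imp_left inf_le_left.trans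

theorem splitBox_subset_of_distribLattice {K : Set (A × B)} (hK : IsBiIdeal K)
    {a : ι → A} {b : ι → B} (hgen : ∀ i, pureCirc (a i) (b i) ⊆ K) : splitBox a b ⊆ K :=
  fun _ hp => hK.mem_of_forall_subset_le_sup_or hgen univ (by simp)
    fun S _ => Set.mem_iInter.1 hp S

end

section

variable {A B : Type*} [Lattice A] [OrderBot A] [Lattice B] [OrderBot B]
  {ι : Type*} [Fintype ι] [DecidableEq ι]

theorem splitBox_subset_of_distrib
    (hdist : (∀ x y z : A, x ⊓ (y ⊔ z) ≤ x ⊓ y ⊔ x ⊓ z) ∨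
      (∀ x y z : B, x ⊓ (y ⊔ z) ≤ x ⊓ y ⊔ x ⊓ z))
    {K : Set (A × B)} (hK : IsBiIdeal K) {a : ι → A} {b : ι → B}
    (hgen : ∀ i, pureCirc (a i) (b i) ⊆ K) : splitBox a b ⊆ K := by
  rcases hdist with hA | hB
  · let := DistribLattice.ofInfSupLe hA
    exact splitBox_subset_of_distribLattice hK hgen
  · let := DistribLattice.ofInfSupLe hB
    intro p hp
    exact splitBox_subset_of_distribLattice (K := Prod.swap ⁻¹' K) hK.preimage_swap
      (fun i q hq => hgen i ⟨hq.2, hq.1⟩) (mem_splitBox_swap_iff.2 hp)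

theorem isLeast_splitBox
    (hdist : (∀ x y z : A, x ⊓ (y ⊔ z) ≤ x ⊓ y ⊔ x ⊓ z) ∨
      (∀ x y z : B, x ⊓ (y ⊔ z) ≤ x ⊓ y ⊔ x ⊓ z)) (a : ι → A) (b : ι → B) :
    IsLeast {K | IsBiIdeal K ∧ ⋃ i, pureCirc (a i) (b i) ⊆ K} (splitBox a b) :=
  ⟨⟨isBiIdeal_splitBox a b, Set.iUnion_subset (pureCirc_subset_splitBox a b)⟩,
    fun _ hK => splitBox_subset_of_distrib hdist hK.1 fun i => (Set.subset_iUnion _ i).trans hK.2⟩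

end

section

open Finset

/-- `u ⊓ ⨅ i ∈ s, f i`, which makes sense without a top element. -/
def boundedInf {α ι : Type*} [SemilatticeInf α] (u : α) (f : ι → α) (s : Finset ι) : α :=
  (insertNone s).inf' insertNone_nonempty fun o => o.elim u f

theorem le_boundedInf_iff {α ι : Type*} [SemilatticeInf α] {u x : α} {f : ι → α}
    {s : Finset ι} : x ≤ boundedInf u f s ↔ x ≤ u ∧ ∀ i ∈ s, x ≤ f i := by
  simp [boundedInf, le_inf'_iff, Option.forall]

variable {A B : Type*} [Lattice A] [OrderBot A] [Lattice B] [OrderBot B]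

theorem mem_tensProd_iff {H : Set (A × B)} :
    H ∈ TensProd A B ↔ ∃ (n : ℕ) (a : Fin (n + 1) → A) (b : Fin (n + 1) → B),
      IsLeast {K | IsBiIdeal K ∧ ⋃ i, pureCirc (a i) (b i) ⊆ K} H := by
  constructor
  · rintro ⟨hH, n, a, b, hsub, hmin⟩
    exact ⟨n, a, b, ⟨hH, hsub⟩, fun K hK => hmin K hK.1 hK.2⟩
  · rintro ⟨n, a, b, ⟨hH, hsub⟩, hmin⟩
    exact ⟨hH, n, a, b, hsub, fun K hK hgen => hmin ⟨hK, hgen⟩⟩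

theorem mem_tensProd_of_isLeast {ι : Type*} [Fintype ι] [Nonempty ι] {c : ι → A} {d : ι → B}
    {H : Set (A × B)} (h : IsLeast {K | IsBiIdeal K ∧ ⋃ i, pureCirc (c i) (d i) ⊆ K} H) :
    H ∈ TensProd A B := by
  obtain ⟨n, ⟨e⟩⟩ := exists_nonempty_equiv_fin_succ ι
  refine mem_tensProd_iff.2 ⟨n, c ∘ e, d ∘ e, ?_⟩
  simpa only [Function.comp_apply, e.surjective.iUnion_comp fun i => pureCirc (c i) (d i)] using h

theorem isLeast_iInter_pureBox {ι : Type*} [Fintype ι] [DecidableEq ι] {a : ι → A} {b : ι → B}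
    {u : A} {v : B} (h : ⋂ i, pureBox (a i) (b i) ⊆ pureTens u v) :
    IsLeast {K | IsBiIdeal K ∧
        ⋃ S : Finset ι, pureCirc (boundedInf u a S) (boundedInf v b Sᶜ) ⊆ K}
      (⋂ i, pureBox (a i) (b i)) := by
  classical
  refine ⟨⟨IsBiIdeal.iInter fun i => isBiIdeal_pureBox _ _, Set.iUnion_subset fun S p hp => ?_⟩,
    fun K ⟨hK, hgen⟩ p hp => ?_⟩
  · rw [pureCirc, Set.mem_ofPred_eq, le_boundedInf_iff, le_boundedInf_iff] at hp
    refine Set.mem_iInter.2 fun i => ?_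
    by_cases hi : i ∈ S
    · exact Or.inl (hp.1.2 i hi)
    · exact Or.inr (hp.2.2 i (mem_compl.2 hi))
  rcases h hp with ⟨hu, hv⟩ | hbot
  · -- `p` lies in the generator indexed by the set of boxes it enters through the first coordinate.
    refine hgen (Set.mem_iUnion.2 ⟨univ.filter fun i => p.1 ≤ a i, ?_⟩)
    refine ⟨le_boundedInf_iff.2 ⟨hu, fun i hi => (mem_filter.1 hi).2⟩,
      le_boundedInf_iff.2 ⟨hv, fun i hi => ?_⟩⟩
    exact (Set.mem_iInter.1 hp i).resolve_left fun hle => mem_compl.1 hi (by simp [hle])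
  · exact hK.mem_of_isBot hbot

end

/-- If `A` or `B` is distributive, then the semilattice tensor product and the
lattice tensor product coincide: `A ⊗ B = A ⊠ B`. -/
theorem stmt_14 {A B : Type*} [Lattice A] [OrderBot A] [Lattice B] [OrderBot B]
    (hdist : (∀ x y z : A, x ⊓ (y ⊔ z) ≤ x ⊓ y ⊔ x ⊓ z) ∨
      (∀ x y z : B, x ⊓ (y ⊔ z) ≤ x ⊓ y ⊔ x ⊓ z)) :
    TensProd A B = LatTens A B := by
  ext H
  constructor
  · intro hH
    obtain ⟨n, a, b, hH⟩ := mem_tensProd_iff.1 hH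
    rw [hH.unique (isLeast_splitBox hdist a b)]
    exact splitBox_mem_latTens a b
  · rintro ⟨⟨n, a, b, rfl⟩, u, v, hconf⟩
    exact mem_tensProd_of_isLeast (isLeast_iInter_pureBox hconf)
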